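/- arXiv:1304.6999 — 2 statements merged into one kernel-verified Lean document; each statement's English description precedes it below -/
import Mathlib

section
/- Let p ∈ [0, 1/2). There exists a constant C > 0 such that for all h ∈ (0, 1), Σ_{m≥1} λ_m^{-p} (1 - e^{-2 λ_m h})/(2 λ_m) ≤ C h^{p + 1/2}. -/
/-!
Since `λ_m ≥ m²` and `1 - e^{-t} ≤ min(t, 1)`, the `m`-th term is at most `m^{-2p} min(h, m^{-2})`.
Split the sum at `N = ⌈h^{-1/2}⌉`: the first `N` terms contribute at most
`h ∑_{m ≤ N} m^{-2p} ≤ h N^{1-2p} / (1 - 2p)`, and the tail at most `N^{-2p} ∑_{m > N} m^{-2} ≤ N^{-2p-1}`;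
for this `N` both are `O(h^{p + 1/2})`.
-/

open Real Finset

noncomputable def lam (m : ℕ) : ℝ := (Real.pi * m) ^ 2 / 2

theorem mul_rpow_sub_one_le_rpow_sub_rpow {a x : ℝ} (ha0 : 0 ≤ a) (ha1 : a ≤ 1) (hx : 0 ≤ x) :
    a * (x + 1) ^ (a - 1) ≤ (x + 1) ^ a - x ^ a := by
  have hx1 : 0 < x + 1 := by linarith
  have hs : -1 ≤ -(x + 1)⁻¹ := by
    linarith [inv_le_one_of_one_le₀ (show 1 ≤ x + 1 by linarith)]
  have hxa : x ^ a = (x + 1) ^ a * (1 + -(x + 1)⁻¹) ^ a := by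
    rw [← mul_rpow hx1.le (by linarith)]
    congr 1
    field_simp
    ring
  -- Bernoulli's inequality, for `x = (x + 1) * (1 - (x + 1)⁻¹)`
  have bernoulli := rpow_one_add_le_one_add_mul_self hs ha0 ha1
  rw [hxa, rpow_sub_one hx1.ne']
  nlinarith [rpow_pos_of_pos hx1 a, mul_le_mul_of_nonneg_left bernoulli (rpow_pos_of_pos hx1 a).le,
    show (x + 1) ^ a / (x + 1) = (x + 1) ^ a * (x + 1)⁻¹ from div_eq_mul_inv _ _]

theorem sum_range_rpow_sub_one_le {a : ℝ} (ha0 : 0 < a) (ha1 : a ≤ 1) (N : ℕ) :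
    ∑ i ∈ range N, ((i : ℝ) + 1) ^ (a - 1) ≤ (N : ℝ) ^ a / a := by
  rw [le_div_iff₀ ha0, sum_mul]
  calc ∑ i ∈ range N, ((i : ℝ) + 1) ^ (a - 1) * a
      ≤ ∑ i ∈ range N, (((i + 1 : ℕ) : ℝ) ^ a - (i : ℝ) ^ a) := by
        refine sum_le_sum fun i _ => ?_
        push_cast
        linarith [mul_rpow_sub_one_le_rpow_sub_rpow ha0.le ha1 (Nat.cast_nonneg (α := ℝ) i)]
    _ = (N : ℝ) ^ a := by
        rw [sum_range_sub (fun i : ℕ => (i : ℝ) ^ a)]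
        simp [zero_rpow ha0.ne']

theorem sum_range_inv_sq_le {x : ℝ} (hx : 0 < x) (k : ℕ) :
    ∑ i ∈ range k, ((x + i + 1) ^ 2)⁻¹ ≤ x⁻¹ := by
  calc ∑ i ∈ range k, ((x + i + 1) ^ 2)⁻¹
      ≤ ∑ i ∈ range k, ((x + i)⁻¹ - (x + (i + 1 : ℕ))⁻¹) := by
        refine sum_le_sum fun i _ => ?_
        have hi : 0 < x + i := by positivity
        push_cast
        rw [← add_assoc, inv_sub_inv hi.ne' (by positivity), add_sub_cancel_left, one_div]
        exact inv_anti₀ (by positivity) (by nlinarith)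
    _ = x⁻¹ - (x + k)⁻¹ := by simpa using sum_range_sub' (fun i : ℕ => (x + i)⁻¹) k
    _ ≤ x⁻¹ := by linarith [inv_pos.2 (show 0 < x + k by positivity)]

section Weight

variable {μ : ℝ}

theorem one_sub_exp_div_nonneg (hμ : 0 ≤ μ) {h : ℝ} (hh : 0 ≤ h) :
    0 ≤ (1 - exp (-2 * μ * h)) / (2 * μ) := by
  have : exp (-2 * μ * h) ≤ 1 := exp_le_one_iff.2 (by nlinarith)
  exact div_nonneg (by linarith) (by linarith)

theorem one_sub_exp_div_le (hμ : 0 < μ) (h : ℝ) : (1 - exp (-2 * μ * h)) / (2 * μ) ≤ h := by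
  rw [div_le_iff₀ (by positivity)]
  linarith [add_one_le_exp (-2 * μ * h)]

theorem one_sub_exp_div_le_inv (hμ : 0 < μ) (h : ℝ) :
    (1 - exp (-2 * μ * h)) / (2 * μ) ≤ (2 * μ)⁻¹ := by
  rw [div_eq_mul_inv]
  exact mul_le_of_le_one_left (by positivity) (by linarith [exp_pos (-2 * μ * h)])

end Weight

theorem lam_succ_pos (m : ℕ) : 0 < lam (m + 1) := by
  unfold lam
  positivity

theorem sq_le_lam_succ (m : ℕ) : ((m : ℝ) + 1) ^ 2 ≤ lam (m + 1) := by
  have : (2 : ℝ) ≤ π ^ 2 := by nlinarith [pi_gt_three]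
  unfold lam
  push_cast
  nlinarith [sq_nonneg ((m : ℝ) + 1)]

theorem lam_succ_rpow_neg_le {p : ℝ} (hp : 0 ≤ p) (m : ℕ) :
    lam (m + 1) ^ (-p) ≤ ((m : ℝ) + 1) ^ (-2 * p) := by
  calc lam (m + 1) ^ (-p) ≤ (((m : ℝ) + 1) ^ 2) ^ (-p) :=
        rpow_le_rpow_of_nonpos (by positivity) (sq_le_lam_succ m) (by linarith)
    _ = ((m : ℝ) + 1) ^ (-2 * p) := by
        rw [← rpow_natCast, ← rpow_mul (by positivity)]
        norm_num

noncomputable def heatTerm (p h : ℝ) (m : ℕ) : ℝ :=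
  lam (m + 1) ^ (-p) * (1 - exp (-2 * lam (m + 1) * h)) / (2 * lam (m + 1))

section HeatTerm

variable {p h : ℝ}

theorem heatTerm_nonneg (hh : 0 ≤ h) (m : ℕ) : 0 ≤ heatTerm p h m := by
  rw [heatTerm, mul_div_assoc]
  exact mul_nonneg (rpow_nonneg (lam_succ_pos m).le _) (one_sub_exp_div_nonneg (lam_succ_pos m).le hh)

theorem heatTerm_le_mul (hp : 0 ≤ p) (hh : 0 ≤ h) (m : ℕ) :
    heatTerm p h m ≤ ((m : ℝ) + 1) ^ (-2 * p) * h := by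
  rw [heatTerm, mul_div_assoc]
  exact (mul_le_mul_of_nonneg_left (one_sub_exp_div_le (lam_succ_pos m) h)
    (rpow_nonneg (lam_succ_pos m).le _)).trans
    (mul_le_mul_of_nonneg_right (lam_succ_rpow_neg_le hp m) hh)

theorem heatTerm_le_mul_inv_sq (hp : 0 ≤ p) (m : ℕ) :
    heatTerm p h m ≤ ((m : ℝ) + 1) ^ (-2 * p) * (((m : ℝ) + 1) ^ 2)⁻¹ := by
  have hlam := lam_succ_pos m
  have hinv : (2 * lam (m + 1))⁻¹ ≤ (((m : ℝ) + 1) ^ 2)⁻¹ :=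
    inv_anti₀ (by positivity) (by linarith [sq_le_lam_succ m])
  rw [heatTerm, mul_div_assoc]
  exact (mul_le_mul_of_nonneg_left ((one_sub_exp_div_le_inv hlam h).trans hinv)
    (rpow_nonneg hlam.le _)).trans
    (mul_le_mul_of_nonneg_right (lam_succ_rpow_neg_le hp m) (by positivity))

theorem sum_range_heatTerm_le (hp0 : 0 ≤ p) (hp : p < 1 / 2) (hh : 0 ≤ h) (N : ℕ) :
    ∑ m ∈ range N, heatTerm p h m ≤ (N : ℝ) ^ (1 - 2 * p) / (1 - 2 * p) * h := by
  have hsum := sum_range_rpow_sub_one_le (a := 1 - 2 * p) (by linarith) (by linarith) N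
  rw [show 1 - 2 * p - 1 = -2 * p by ring] at hsum
  calc ∑ m ∈ range N, heatTerm p h m ≤ ∑ m ∈ range N, ((m : ℝ) + 1) ^ (-2 * p) * h :=
        sum_le_sum fun m _ => heatTerm_le_mul hp0 hh m
    _ ≤ (N : ℝ) ^ (1 - 2 * p) / (1 - 2 * p) * h := by
        rw [← sum_mul]
        exact mul_le_mul_of_nonneg_right hsum hh

theorem sum_range_heatTerm_add_le (hp : 0 ≤ p) {N : ℕ} (hN : 0 < N) (k : ℕ) :
    ∑ i ∈ range k, heatTerm p h (N + i) ≤ (N : ℝ) ^ (-2 * p) * (N : ℝ)⁻¹ := by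
  have hN' : (0 : ℝ) < N := by exact_mod_cast hN
  calc ∑ i ∈ range k, heatTerm p h (N + i)
      ≤ ∑ i ∈ range k, (N : ℝ) ^ (-2 * p) * (((N : ℝ) + i + 1) ^ 2)⁻¹ := by
        refine sum_le_sum fun i _ => (heatTerm_le_mul_inv_sq hp (N + i)).trans ?_
        push_cast
        exact mul_le_mul_of_nonneg_right
          (rpow_le_rpow_of_nonpos hN' (by linarith [(Nat.cast_nonneg i : (0 : ℝ) ≤ i)])
            (by linarith)) (by positivity)
    _ ≤ (N : ℝ) ^ (-2 * p) * (N : ℝ)⁻¹ := by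
        rw [← mul_sum]
        exact mul_le_mul_of_nonneg_left (sum_range_inv_sq_le hN' k) (by positivity)

end HeatTerm

theorem exists_cutoff_le {p h : ℝ} (hp0 : 0 ≤ p) (hp : p < 1 / 2) (hh0 : 0 < h) (hh1 : h ≤ 1) :
    ∃ N : ℕ, 0 < N ∧ (N : ℝ) ^ (1 - 2 * p) / (1 - 2 * p) * h ≤ 2 / (1 - 2 * p) * h ^ (p + 1 / 2) ∧
      (N : ℝ) ^ (-2 * p) * (N : ℝ)⁻¹ ≤ h ^ (p + 1 / 2) := by
  set s := h ^ (-(1 / 2) : ℝ)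
  have hs : 1 ≤ s := one_le_rpow_of_pos_of_le_one_of_nonpos hh0 hh1 (by norm_num)
  have hsN : s ≤ ⌈s⌉₊ := Nat.le_ceil s
  have hNs : (⌈s⌉₊ : ℝ) ≤ 2 * s := by linarith [Nat.ceil_lt_add_one (by linarith : 0 ≤ s)]
  have hpow (x : ℝ) : s ^ x = h ^ (-x / 2) := by rw [← rpow_mul hh0.le]; ring_nf
  refine ⟨⌈s⌉₊, Nat.ceil_pos.2 (by linarith), ?_, ?_⟩
  · have hhead : (⌈s⌉₊ : ℝ) ^ (1 - 2 * p) ≤ 2 * s ^ (1 - 2 * p) :=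
      calc (⌈s⌉₊ : ℝ) ^ (1 - 2 * p) ≤ (2 * s) ^ (1 - 2 * p) := rpow_le_rpow (by linarith) hNs (by linarith)
        _ = 2 ^ (1 - 2 * p) * s ^ (1 - 2 * p) := mul_rpow (by norm_num) (by linarith)
        _ ≤ 2 * s ^ (1 - 2 * p) := by
          gcongr
          exact rpow_le_self_of_one_le (by norm_num) (by linarith)
    calc (⌈s⌉₊ : ℝ) ^ (1 - 2 * p) / (1 - 2 * p) * h ≤ 2 * s ^ (1 - 2 * p) / (1 - 2 * p) * h :=
          mul_le_mul_of_nonneg_right (div_le_div_of_nonneg_right hhead (by linarith)) hh0.le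
      _ = 2 / (1 - 2 * p) * h ^ (p + 1 / 2) := by
          rw [hpow, div_mul_eq_mul_div, mul_assoc, ← rpow_add_one hh0.ne']
          ring_nf
  · calc (⌈s⌉₊ : ℝ) ^ (-2 * p) * (⌈s⌉₊ : ℝ)⁻¹ ≤ s ^ (-2 * p) * s ^ (-1 : ℝ) := by
          rw [rpow_neg_one]
          exact mul_le_mul (rpow_le_rpow_of_nonpos (by linarith) hsN (by linarith))
            (inv_anti₀ (by linarith) hsN) (by positivity) (by positivity)
      _ = h ^ (p + 1 / 2) := by
          rw [hpow, hpow, ← rpow_add hh0]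
          ring_nf

/-- Bound on `Σ_m λ_m^{-p} (1-e^{-2λ_m h})/(2λ_m)` (term `δ_1`). -/
theorem stmt_9 (p : ℝ) (hp0 : 0 ≤ p) (hp : p < 1 / 2) :
    ∃ C : ℝ, 0 < C ∧ ∀ h : ℝ, 0 < h → h < 1 →
      ∑' m : ℕ, lam (m + 1) ^ (-p) * (1 - Real.exp (-2 * lam (m + 1) * h)) / (2 * lam (m + 1)) ≤
        C * h ^ (p + 1 / 2) := by
  have ha : 0 < 1 - 2 * p := by linarith
  refine ⟨2 / (1 - 2 * p) + 1, by positivity, fun h hh0 hh1 => ?_⟩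
  obtain ⟨N, hN, hhead, htail⟩ := exists_cutoff_le hp0 hp hh0 hh1.le
  change ∑' m, heatTerm p h m ≤ _
  refine tsum_le_of_sum_range_le (heatTerm_nonneg hh0.le) fun k => ?_
  calc ∑ m ∈ range k, heatTerm p h m ≤ ∑ m ∈ range (N + k), heatTerm p h m :=
        sum_le_sum_of_subset_of_nonneg (range_mono (by omega)) fun m _ _ => heatTerm_nonneg hh0.le m
    _ = ∑ m ∈ range N, heatTerm p h m + ∑ i ∈ range k, heatTerm p h (N + i) := sum_range_add _ _ _
    _ ≤ 2 / (1 - 2 * p) * h ^ (p + 1 / 2) + h ^ (p + 1 / 2) :=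
        add_le_add ((sum_range_heatTerm_le hp0 hp hh0.le N).trans hhead)
          ((sum_range_heatTerm_add_le hp0 hN k).trans htail)
    _ = (2 / (1 - 2 * p) + 1) * h ^ (p + 1 / 2) := by ring
end

section
/- Let p ∈ [0, 1/2). There exists a constant C > 0 such that for all h ∈ (0, 1), Σ_{m≥1} λ_m^{-p} ( 1/(1+λ_m h)² - e^{-2 λ_m h} ) / (2 λ_m) ≤ C h^{p + 1/2}. (Note that 1/(1+λh)² - e^{-2λh} ≥ 0 for all λ, h ≥ 0.) -/
open Real Finset

/-- `(1 + x)⁻²` is the squared amplification factor of an implicit Euler step on the mode `λ`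
(with `x = λ h`), `exp (-2x)` the exact one. -/
noncomputable def eulerDefect (x : ℝ) : ℝ := 1 / (1 + x) ^ 2 - exp (-2 * x)

theorem eulerDefect_nonneg {x : ℝ} (hx : 0 ≤ x) : 0 ≤ eulerDefect x := by
  have hexp : (1 + x) ^ 2 ≤ exp (2 * x) := by
    rw [show 2 * x = x + x by ring, exp_add, sq]
    have := add_one_le_exp x
    gcongr <;> linarith
  rw [eulerDefect, sub_nonneg, show -2 * x = -(2 * x) by ring, exp_neg, ← one_div]
  gcongr

theorem eulerDefect_le_one {x : ℝ} (hx : 0 ≤ x) : eulerDefect x ≤ 1 := by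
  have : 1 / (1 + x) ^ 2 ≤ 1 := div_le_one_of_le₀ (by nlinarith) (by positivity)
  have := exp_pos (-2 * x)
  unfold eulerDefect
  linarith

theorem eulerDefect_le_three_mul_sq {x : ℝ} (hx : 0 ≤ x) : eulerDefect x ≤ 3 * x ^ 2 := by
  have hexp : 1 - 2 * x ≤ exp (-2 * x) := by linarith [add_one_le_exp (-2 * x)]
  have hinv : 1 / (1 + x) ^ 2 ≤ 1 - 2 * x + 3 * x ^ 2 := by
    rw [div_le_iff₀ (by positivity)]
    nlinarith [sq_nonneg x, mul_nonneg hx (sq_nonneg x)]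
  unfold eulerDefect
  linarith

/-- The paper's `δ₃(λ)`, with `E|X(t_{N-1})|²` already bounded by `1 / (2λ)`. -/
noncomputable def deltaThree (p h l : ℝ) : ℝ :=
  l ^ (-p) * (1 / (1 + l * h) ^ 2 - exp (-2 * l * h)) / (2 * l)

section deltaThree

variable {p h l : ℝ}

theorem deltaThree_eq (hl : 0 < l) :
    deltaThree p h l = l ^ (-(p + 1)) / 2 * eulerDefect (l * h) := by
  rw [deltaThree, eulerDefect, neg_add', rpow_sub_one hl.ne', mul_assoc (-2) l h]
  field_simp

theorem deltaThree_nonneg (hl : 0 < l) (hh : 0 ≤ h) : 0 ≤ deltaThree p h l := by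
  rw [deltaThree_eq hl]
  have := eulerDefect_nonneg (mul_nonneg hl.le hh)
  positivity

theorem deltaThree_le_rpow (hl : 0 < l) (hh : 0 ≤ h) :
    deltaThree p h l ≤ l ^ (-(p + 1)) / 2 := by
  rw [deltaThree_eq hl]
  have := eulerDefect_le_one (mul_nonneg hl.le hh)
  have : 0 ≤ l ^ (-(p + 1)) := by positivity
  nlinarith

theorem deltaThree_le_sq_mul_rpow (hl : 0 < l) (hh : 0 ≤ h) :
    deltaThree p h l ≤ 3 / 2 * h ^ 2 * l ^ (1 - p) := by
  have hpow : l ^ (1 - p) = l ^ (-(p + 1)) * l ^ 2 := by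
    rw [← rpow_add_natCast hl.ne']; congr 1; push_cast; ring
  rw [deltaThree_eq hl, hpow]
  have := eulerDefect_le_three_mul_sq (mul_nonneg hl.le hh)
  have : 0 ≤ l ^ (-(p + 1)) := by positivity
  calc l ^ (-(p + 1)) / 2 * eulerDefect (l * h) ≤ l ^ (-(p + 1)) / 2 * (3 * (l * h) ^ 2) := by
        gcongr
    _ = _ := by ring

end deltaThree

theorem lam_pos {m : ℕ} (hm : 0 < m) : 0 < lam m := by
  unfold lam; positivity

theorem sq_le_lam (m : ℕ) : (m : ℝ) ^ 2 ≤ lam m := by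
  have : 2 ≤ π ^ 2 := by nlinarith [pi_gt_three]
  rw [lam, mul_pow]
  nlinarith [sq_nonneg (m : ℝ)]

theorem lam_le_five_mul_sq (m : ℕ) : lam m ≤ 5 * (m : ℝ) ^ 2 := by
  have : π ^ 2 ≤ 10 := by nlinarith [pi_lt_d2, pi_pos]
  rw [lam, mul_pow]
  nlinarith [sq_nonneg (m : ℝ)]

section deltaThreeLam

variable {p h : ℝ} {m : ℕ}

theorem deltaThree_lam_le_rpow (hp : -1 ≤ p) (hh : 0 ≤ h) (hm : 0 < m) :
    deltaThree p h (lam m) ≤ (m : ℝ) ^ (-(2 * p + 2)) / 2 := by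
  have hm' : (0 : ℝ) < m := by exact_mod_cast hm
  calc deltaThree p h (lam m) ≤ lam m ^ (-(p + 1)) / 2 := deltaThree_le_rpow (lam_pos hm) hh
    _ ≤ ((m : ℝ) ^ 2) ^ (-(p + 1)) / 2 := by
        gcongr ?_ / 2
        exact rpow_le_rpow_of_nonpos (by positivity) (sq_le_lam m) (by linarith)
    _ = (m : ℝ) ^ (-(2 * p + 2)) / 2 := by
        rw [← rpow_natCast_mul hm'.le]; ring_nf

theorem deltaThree_lam_le_sq_mul_rpow (hp0 : 0 ≤ p) (hp1 : p ≤ 1) (hh : 0 ≤ h) (hm : 0 < m) :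
    deltaThree p h (lam m) ≤ 15 / 2 * h ^ 2 * (m : ℝ) ^ (2 - 2 * p) := by
  have hm' : (0 : ℝ) < m := by exact_mod_cast hm
  have hfive : (5 : ℝ) ^ (1 - p) ≤ 5 := by
    simpa using
      rpow_le_rpow_of_exponent_le (by norm_num : (1 : ℝ) ≤ 5) (by linarith : 1 - p ≤ 1)
  calc deltaThree p h (lam m) ≤ 3 / 2 * h ^ 2 * lam m ^ (1 - p) :=
        deltaThree_le_sq_mul_rpow (lam_pos hm) hh
    _ ≤ 3 / 2 * h ^ 2 * (5 * (m : ℝ) ^ 2) ^ (1 - p) := by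
        gcongr
        · exact (lam_pos hm).le
        · exact lam_le_five_mul_sq m
    _ = 3 / 2 * h ^ 2 * ((5 : ℝ) ^ (1 - p) * (m : ℝ) ^ (2 - 2 * p)) := by
        rw [mul_rpow (by norm_num) (by positivity), ← rpow_natCast_mul hm'.le]; ring_nf
    _ ≤ 15 / 2 * h ^ 2 * (m : ℝ) ^ (2 - 2 * p) := by
        have : 0 ≤ h ^ 2 * (m : ℝ) ^ (2 - 2 * p) := by positivity
        nlinarith

end deltaThreeLam

theorem sum_range_add_rpow_neg_le {s x : ℝ} (hs : 1 < s) (hx : 0 < x) (n : ℕ) :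
    ∑ i ∈ range n, (x + (i + 1)) ^ (-s) ≤ x ^ (1 - s) / (s - 1) := by
  have hanti : AntitoneOn (fun y : ℝ => y ^ (-s)) (Set.Icc x (x + n)) :=
    (antitoneOn_rpow_Ioi_of_exponent_nonpos (by linarith)).mono fun y hy => hx.trans_le hy.1
  have hint : ∫ y in x..x + n, y ^ (-s) = (x ^ (1 - s) - (x + n) ^ (1 - s)) / (s - 1) := by
    rw [integral_rpow (Or.inr ⟨by linarith, Set.notMem_uIcc_of_lt hx (by positivity)⟩),
      show -s + 1 = 1 - s by ring, ← neg_sub s 1, div_neg, ← neg_div, neg_sub]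
  have hsum := hanti.sum_le_integral
  push_cast at hsum
  rw [hint] at hsum
  refine hsum.trans (div_le_div_of_nonneg_right ?_ (by linarith))
  have : 0 ≤ (x + n) ^ (1 - s) := by positivity
  linarith

theorem summable_add_rpow_neg {s x : ℝ} (hs : 1 < s) (hx : 0 < x) :
    Summable fun i : ℕ => (x + (i + 1)) ^ (-s) :=
  summable_of_sum_range_le (fun _ => by positivity) (sum_range_add_rpow_neg_le hs hx)

theorem tsum_add_rpow_neg_le {s x : ℝ} (hs : 1 < s) (hx : 0 < x) :
    ∑' i : ℕ, (x + (i + 1)) ^ (-s) ≤ x ^ (1 - s) / (s - 1) :=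
  Real.tsum_le_of_sum_range_le (fun _ => by positivity) (sum_range_add_rpow_neg_le hs hx)

theorem sum_range_deltaThree_lam_le {p h : ℝ} (hp0 : 0 ≤ p) (hp1 : p ≤ 1) (hh : 0 ≤ h)
    (M : ℕ) :
    ∑ k ∈ range M, deltaThree p h (lam (k + 1)) ≤ 15 / 2 * h ^ 2 * (M : ℝ) ^ (3 - 2 * p) := by
  calc ∑ k ∈ range M, deltaThree p h (lam (k + 1))
      ≤ ∑ _k ∈ range M, 15 / 2 * h ^ 2 * (M : ℝ) ^ (2 - 2 * p) := by
        gcongr with k hk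
        refine (deltaThree_lam_le_sq_mul_rpow hp0 hp1 hh k.succ_pos).trans ?_
        gcongr
        · linarith
        · exact_mod_cast mem_range.1 hk
    _ = 15 / 2 * h ^ 2 * (M : ℝ) ^ (3 - 2 * p) := by
        rw [sum_const, card_range, nsmul_eq_mul, show 3 - 2 * p = 2 - 2 * p + 1 by ring,
          rpow_add_one' M.cast_nonneg (by linarith)]
        ring

theorem deltaThree_lam_add_le {p h : ℝ} (hp : -1 ≤ p) (hh : 0 ≤ h) (M k : ℕ) :
    deltaThree p h (lam (k + M + 1)) ≤ ((M : ℝ) + (k + 1)) ^ (-(2 * p + 2)) / 2 := by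
  simpa [add_assoc, add_comm, add_left_comm] using deltaThree_lam_le_rpow hp hh (k + M).succ_pos

theorem summable_deltaThree_lam_add {p h : ℝ} (hp : -1 / 2 < p) (hh : 0 ≤ h) {M : ℕ}
    (hM : 0 < M) : Summable fun k : ℕ => deltaThree p h (lam (k + M + 1)) :=
  ((summable_add_rpow_neg (by linarith) (Nat.cast_pos.2 hM)).div_const 2).of_nonneg_of_le
    (fun _ => deltaThree_nonneg (lam_pos (Nat.succ_pos _)) hh)
    (deltaThree_lam_add_le (by linarith) hh M)

theorem tsum_deltaThree_lam_add_le {p h : ℝ} (hp : -1 / 2 < p) (hh : 0 ≤ h) {M : ℕ}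
    (hM : 0 < M) :
    ∑' k : ℕ, deltaThree p h (lam (k + M + 1)) ≤
      (M : ℝ) ^ (-(2 * p + 1)) / (2 * (2 * p + 1)) := by
  have hM' : (0 : ℝ) < M := Nat.cast_pos.2 hM
  calc ∑' k : ℕ, deltaThree p h (lam (k + M + 1))
      ≤ ∑' k : ℕ, ((M : ℝ) + (k + 1)) ^ (-(2 * p + 2)) / 2 :=
        (summable_deltaThree_lam_add hp hh hM).tsum_le_tsum
          (deltaThree_lam_add_le (by linarith) hh M)
          ((summable_add_rpow_neg (by linarith) hM').div_const 2)
    _ ≤ (M : ℝ) ^ (1 - (2 * p + 2)) / (2 * p + 2 - 1) / 2 := by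
        rw [tsum_div_const]
        gcongr
        exact tsum_add_rpow_neg_le (by linarith) hM'
    _ = (M : ℝ) ^ (-(2 * p + 1)) / (2 * (2 * p + 1)) := by
        rw [show 1 - (2 * p + 2) = -(2 * p + 1) by ring, div_div]
        ring_nf

section cutoff

variable {h x a : ℝ}

theorem exists_nat_one_le_sqrt_mul_le_two (hh0 : 0 < h) (hh1 : h ≤ 1) :
    ∃ M : ℕ, 0 < M ∧ 1 ≤ √h * M ∧ √h * M ≤ 2 := by
  have hσ : 0 < √h := sqrt_pos.2 hh0
  have hσ1 : √h ≤ 1 := sqrt_le_one.2 hh1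
  refine ⟨⌈(√h)⁻¹⌉₊, Nat.ceil_pos.2 (inv_pos.2 hσ), ?_, ?_⟩
  · calc 1 = √h * (√h)⁻¹ := (mul_inv_cancel₀ hσ.ne').symm
      _ ≤ √h * ⌈(√h)⁻¹⌉₊ := by gcongr; exact Nat.le_ceil _
  · calc √h * ⌈(√h)⁻¹⌉₊ ≤ √h * ((√h)⁻¹ + 1) := by
          gcongr; exact (Nat.ceil_lt_add_one (by positivity)).le
      _ = 1 + √h := by field_simp
      _ ≤ 2 := by linarith

theorem rpow_eq_rpow_mul_sqrt_mul_rpow (hh : 0 < h) (hx : 0 ≤ x) (a : ℝ) :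
    x ^ a = h ^ (-(a / 2)) * (√h * x) ^ a := by
  rw [mul_rpow (sqrt_nonneg h) hx, sqrt_eq_rpow, ← rpow_mul hh.le, ← mul_assoc, ← rpow_add hh,
    show -(a / 2) + 1 / 2 * a = 0 by ring, rpow_zero, one_mul]

theorem sq_mul_rpow_le_of_sqrt_mul_le (hh : 0 < h) (hx : 0 ≤ x) (hx2 : √h * x ≤ 2)
    (ha : 0 ≤ a) :
    h ^ 2 * x ^ a ≤ 2 ^ a * h ^ (2 - a / 2) := by
  rw [rpow_eq_rpow_mul_sqrt_mul_rpow hh hx, ← mul_assoc, ← rpow_natCast, ← rpow_add hh,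
    mul_comm (2 ^ a)]
  push_cast
  rw [show (2 : ℝ) + -(a / 2) = 2 - a / 2 by ring]
  gcongr

theorem rpow_neg_le_of_one_le_sqrt_mul (hh : 0 < h) (hx : 0 ≤ x) (hx1 : 1 ≤ √h * x)
    (ha : 0 ≤ a) :
    x ^ (-a) ≤ h ^ (a / 2) := by
  rw [rpow_eq_rpow_mul_sqrt_mul_rpow hh hx, neg_div, neg_neg]
  calc h ^ (a / 2) * (√h * x) ^ (-a) ≤ h ^ (a / 2) * 1 := by
        gcongr
        exact rpow_le_one_of_one_le_of_nonpos hx1 (by linarith)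
    _ = h ^ (a / 2) := mul_one _

end cutoff

/-- Bound on the term `δ_3` of the last step of the weak-error decomposition. -/
theorem stmt_13 (p : ℝ) (hp0 : 0 ≤ p) (hp : p < 1 / 2) :
    ∃ C : ℝ, 0 < C ∧ ∀ h : ℝ, 0 < h → h < 1 →
      ∑' m : ℕ,
        lam (m + 1) ^ (-p) *
          (1 / (1 + lam (m + 1) * h) ^ 2 - Real.exp (-2 * lam (m + 1) * h)) /
          (2 * lam (m + 1)) ≤
        C * h ^ (p + 1 / 2) := by
  refine ⟨61, by norm_num, fun h hh0 hh1 => ?_⟩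
  obtain ⟨M, hM, hM1, hM2⟩ := exists_nat_one_le_sqrt_mul_le_two hh0 hh1.le
  have hsum : Summable fun k : ℕ => deltaThree p h (lam (k + 1)) :=
    (summable_nat_add_iff M).1 (summable_deltaThree_lam_add (by linarith) hh0.le hM)
  change ∑' k : ℕ, deltaThree p h (lam (k + 1)) ≤ _
  rw [← hsum.sum_add_tsum_nat_add M]
  have head : ∑ k ∈ range M, deltaThree p h (lam (k + 1)) ≤ 60 * h ^ (p + 1 / 2) := by
    have hcut := sq_mul_rpow_le_of_sqrt_mul_le hh0 M.cast_nonneg hM2 (by linarith : 0 ≤ 3 - 2 * p)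
    have htwo : (2 : ℝ) ^ (3 - 2 * p) ≤ 8 :=
      calc (2 : ℝ) ^ (3 - 2 * p) ≤ 2 ^ (3 : ℝ) :=
            rpow_le_rpow_of_exponent_le (by norm_num) (by linarith)
        _ = 8 := by norm_num
    rw [show 2 - (3 - 2 * p) / 2 = p + 1 / 2 by ring] at hcut
    have := sum_range_deltaThree_lam_le hp0 (by linarith) hh0.le M
    nlinarith [rpow_nonneg hh0.le (p + 1 / 2)]
  have tail : ∑' k : ℕ, deltaThree p h (lam (k + M + 1)) ≤ h ^ (p + 1 / 2) := by
    have hcut :=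
      rpow_neg_le_of_one_le_sqrt_mul hh0 M.cast_nonneg hM1 (by linarith : 0 ≤ 2 * p + 1)
    rw [show (2 * p + 1) / 2 = p + 1 / 2 by ring] at hcut
    refine (tsum_deltaThree_lam_add_le (by linarith) hh0.le hM).trans ?_
    exact (div_le_self (by positivity) (by linarith)).trans hcut
  linarith
end
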